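/- On the domain D = (ξ₀₁, ξ₀₂) × ℝ with metric g(ξ,θ) = (1/ξ²)(3/T(ξ) dξ² + dθ²), where T(ξ) = -ξ^{8/3} + Cξ² - 3ε > 0 on (ξ₀₁, ξ₀₂), the Gaussian curvature is K(ξ,θ) = -ξ^{8/3}/9 + ε. -/

import Mathlib

open Set

/-- Coefficient `E` of the metric `g = E dξ² + G dθ²` with `E = 3/(ξ² T(ξ))`,
`T ξ = -ξ^(8/3)+Cξ²-3ε`. -/
noncomputable def Emet (ε C ξ : ℝ) : ℝ :=
  3 / (ξ ^ 2 * (-ξ ^ ((8:ℝ)/3) + C * ξ ^ 2 - 3 * ε))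

/-- Coefficient `G = 1/ξ²` of the metric `g = E dξ² + G dθ²`. -/
noncomputable def Gmet (ξ : ℝ) : ℝ := 1 / ξ ^ 2

lemma sqrtEG (ε C : ℝ) {x : ℝ} (hx : 0 < x)
    (hT : 0 < -x ^ ((8:ℝ)/3) + C * x ^ 2 - 3 * ε) :
    Real.sqrt (Emet ε C x * Gmet x)
      = Real.sqrt 3 / (x ^ 2 * Real.sqrt (-x ^ ((8:ℝ)/3) + C * x ^ 2 - 3 * ε)) := by
  set T := -x ^ ((8:ℝ)/3) + C * x ^ 2 - 3 * ε with hTdef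
  have hx4 : (0:ℝ) < x ^ 4 := by positivity
  have hEG : Emet ε C x * Gmet x = 3 / (x ^ 4 * T) := by
    simp only [Emet, Gmet, ← hTdef]
    field_simp
  rw [hEG, Real.sqrt_div' 3 (mul_pos hx4 hT).le, Real.sqrt_mul hx4.le T]
  congr 1
  rw [show x ^ 4 = (x ^ 2) ^ 2 by ring, Real.sqrt_sq (by positivity)]

lemma keyalg (ε C ξ s u a b : ℝ)
    (hs2 : s ^ 2 = 3) (hu2 : u ^ 2 = -b + C * ξ ^ 2 - 3 * ε) (hab : ξ * a = b)
    (hs : s ≠ 0) (hu : u ≠ 0) (hξ : ξ ≠ 0) :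
    -(1 / (2 * (s / (ξ ^ 2 * u)))) *
      ((-2 * ((-(8 / 3 * a) + C * (2 * ξ)) / (2 * u)) * (s * ξ) - -2 * u * (s * 1)) / (s * ξ) ^ 2)
      = -b / 9 + ε := by
  field_simp
  linear_combination (-54)*hu2 + (-72)*hab + (6*b - 54*ε)*hs2

/-- For the metric `g_{ε,C} = (3/(ξ²T(ξ))) dξ² + (1/ξ²) dθ²` on `(ξ01,ξ02) × ℝ`, the
Gaussian curvature, computed by `K = -(1/(2√(EG))) ∂_ξ(G_ξ/√(EG))`, equals
`-ξ^(8/3)/9 + ε`. -/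
theorem stmt_13 (ε C ξ01 ξ02 : ℝ) (h01 : 0 < ξ01)
    (hpos : ∀ ξ ∈ Ioo ξ01 ξ02, 0 < -ξ ^ ((8:ℝ)/3) + C * ξ ^ 2 - 3 * ε) :
    ∀ ξ ∈ Ioo ξ01 ξ02,
      -(1 / (2 * Real.sqrt (Emet ε C ξ * Gmet ξ))) *
          deriv (fun x => deriv Gmet x / Real.sqrt (Emet ε C x * Gmet x)) ξ
        = -ξ ^ ((8:ℝ)/3) / 9 + ε := by
  intro ξ hmem
  obtain ⟨h1, h2⟩ := hmem
  have hξ : 0 < ξ := h01.trans h1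
  set T : ℝ → ℝ := fun x => -x ^ ((8:ℝ)/3) + C * x ^ 2 - 3 * ε with hTdef
  have hT : 0 < T ξ := hpos ξ ⟨h1, h2⟩
  have hsT : 0 < Real.sqrt (T ξ) := Real.sqrt_pos.mpr hT
  have hs3 : 0 < Real.sqrt 3 := Real.sqrt_pos.mpr (by norm_num)
  -- eventual equality with a closed-form function
  have hnhds : Ioo ξ01 ξ02 ∈ nhds ξ := isOpen_Ioo.mem_nhds ⟨h1, h2⟩
  have hGfun : Gmet = fun y : ℝ => (y ^ 2)⁻¹ := by
    funext y; simp [Gmet, one_div]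
  have heq : (fun x => deriv Gmet x / Real.sqrt (Emet ε C x * Gmet x))
      =ᶠ[nhds ξ] (fun x => -2 * Real.sqrt (T x) / (Real.sqrt 3 * x)) := by
    filter_upwards [hnhds] with x hx
    have hx0 : 0 < x := h01.trans hx.1
    have hTx : 0 < T x := hpos x hx
    have hsTx : 0 < Real.sqrt (T x) := Real.sqrt_pos.mpr hTx
    have hG : deriv Gmet x = -2 / x ^ 3 := by
      rw [hGfun]
      have h := (hasDerivAt_pow 2 x).inv (pow_ne_zero 2 hx0.ne')
      rw [show deriv (fun y : ℝ => (y ^ 2)⁻¹) x = _ from h.deriv]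
      field_simp
      ring
    rw [hG, sqrtEG ε C hx0 hTx]
    rw [div_div_eq_mul_div, div_mul_eq_mul_div, div_div]
    rw [div_eq_div_iff (by positivity) (by positivity)]
    ring
  rw [heq.deriv_eq]
  -- compute the derivative of the closed-form function
  have hTd0 : HasDerivAt T (-((8:ℝ)/3 * ξ ^ ((8:ℝ)/3 - 1)) + C * ((2:ℕ) * ξ ^ 1)) ξ := by
    have ha : HasDerivAt (fun x : ℝ => x ^ ((8:ℝ)/3)) ((8:ℝ)/3 * ξ ^ ((8:ℝ)/3 - 1)) ξ :=
      Real.hasDerivAt_rpow_const (Or.inl hξ.ne')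
    have hb : HasDerivAt (fun x : ℝ => x ^ 2) ((2:ℕ) * ξ ^ 1) ξ := hasDerivAt_pow 2 ξ
    exact (ha.neg.add (hb.const_mul C)).sub_const (3 * ε)
  have hTd : HasDerivAt T (-(8/3 * ξ ^ ((5:ℝ)/3)) + C * (2 * ξ)) ξ := by
    convert hTd0 using 2
    · norm_num
    · push_cast; ring
  have hS : HasDerivAt (fun x => Real.sqrt (T x))
      ((-(8/3 * ξ ^ ((5:ℝ)/3)) + C * (2 * ξ)) / (2 * Real.sqrt (T ξ))) ξ :=
    hTd.sqrt hT.ne'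
  have hnum : HasDerivAt (fun x => -2 * Real.sqrt (T x))
      (-2 * ((-(8/3 * ξ ^ ((5:ℝ)/3)) + C * (2 * ξ)) / (2 * Real.sqrt (T ξ)))) ξ :=
    hS.const_mul (-2)
  have hden : HasDerivAt (fun x : ℝ => Real.sqrt 3 * x) (Real.sqrt 3 * 1) ξ :=
    (hasDerivAt_id ξ).const_mul (Real.sqrt 3)
  have hdne : Real.sqrt 3 * ξ ≠ 0 := by positivity
  have hdiv := hnum.div hden hdne
  rw [show deriv (fun x => -2 * Real.sqrt (T x) / (Real.sqrt 3 * x)) ξ = _ from hdiv.deriv, sqrtEG ε C hξ hT]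
  -- algebra
  have hsq3 : Real.sqrt 3 ^ 2 = 3 := Real.sq_sqrt (by norm_num)
  have hsqT : Real.sqrt (T ξ) ^ 2 = T ξ := Real.sq_sqrt hT.le
  have hab : ξ * ξ ^ ((5:ℝ)/3) = ξ ^ ((8:ℝ)/3) := by
    nth_rewrite 1 [← Real.rpow_one ξ]
    rw [← Real.rpow_add hξ]
    norm_num
  exact keyalg ε C ξ _ _ _ _ hsq3 (by rw [hsqT]) hab hs3.ne' hsT.ne' hξ.ne'
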